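/- In the polynomial ring R = ℂ[z,w,ζ,ω], the 5×5 determinant det A₃ and the 4×4 determinant det B satisfy the identity det A₃ = (ρ̂/2)·det B, where A₃ is the 5×5 matrix whose i-th row is (g_i, L̄(g_i), L̄²(g_i), L̄³(g_i), L̄⁴(g_i)) for g₁ = ρ̂_w³, g₂ = ρ̂_z·ρ̂_w², g₃ = ρ̂_z²·ρ̂_w, g₄ = ρ̂_z³, g₅ = q := ρ̂/2, and B is the 4×4 matrix whose i-th row is (L̄(g_i), L̄²(g_i), L̄³(g_i), L̄⁴(g_i)) for g₁, g₂, g₃, g₄ as above. -/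
import Mathlib


open MvPolynomial

/-- The polarization ρ̂ = −((z−ζ)² + (w−ω)²)/4 of (Im z)² + (Im w)² in ℂ[z,w,ζ,ω],
with variables z = X 0, w = X 1, ζ = X 2, ω = X 3. -/
noncomputable def rhoHat : MvPolynomial (Fin 4) ℂ :=
  C (-(1 / 4 : ℂ)) * ((X 0 - X 2) ^ 2 + (X 1 - X 3) ^ 2)

/-- ρ̂_z = ∂ρ̂/∂z. -/
noncomputable def rhoZ : MvPolynomial (Fin 4) ℂ := pderiv 0 rhoHat

/-- ρ̂_w = ∂ρ̂/∂w. -/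
noncomputable def rhoW : MvPolynomial (Fin 4) ℂ := pderiv 1 rhoHat

/-- ρ̂_ζ = ∂ρ̂/∂ζ. -/
noncomputable def rhoZeta : MvPolynomial (Fin 4) ℂ := pderiv 2 rhoHat

/-- ρ̂_ω = ∂ρ̂/∂ω. -/
noncomputable def rhoOmega : MvPolynomial (Fin 4) ℂ := pderiv 3 rhoHat

/-- The derivation L̄(f) = −ρ̂_ω·∂f/∂ζ + ρ̂_ζ·∂f/∂ω. -/
noncomputable def Lbar (f : MvPolynomial (Fin 4) ℂ) : MvPolynomial (Fin 4) ℂ :=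
  -rhoOmega * pderiv 2 f + rhoZeta * pderiv 3 f

/-- The row-generating functions g₁ = ρ̂_w³, g₂ = ρ̂_z·ρ̂_w², g₃ = ρ̂_z²·ρ̂_w, g₄ = ρ̂_z³,
g₅ = q = ρ̂/2. -/
noncomputable def gRow : Fin 5 → MvPolynomial (Fin 4) ℂ :=
  ![rhoW ^ 3, rhoZ * rhoW ^ 2, rhoZ ^ 2 * rhoW, rhoZ ^ 3, C (1 / 2 : ℂ) * rhoHat]

/-- The 5×5 matrix A₃ with i-th row (gᵢ, L̄(gᵢ), L̄²(gᵢ), L̄³(gᵢ), L̄⁴(gᵢ)). -/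
noncomputable def matA3 : Matrix (Fin 5) (Fin 5) (MvPolynomial (Fin 4) ℂ) :=
  Matrix.of fun i j => Lbar^[(j : ℕ)] (gRow i)

/-- The 4×4 matrix B with i-th row (L̄(gᵢ), L̄²(gᵢ), L̄³(gᵢ), L̄⁴(gᵢ)), i = 1,…,4. -/
noncomputable def matB : Matrix (Fin 4) (Fin 4) (MvPolynomial (Fin 4) ℂ) :=
  Matrix.of fun i j => Lbar^[(j : ℕ) + 1] (gRow i.castSucc)

lemma Lbar_q : Lbar (gRow 4) = 0 := by
  show Lbar (C (1 / 2 : ℂ) * rhoHat) = 0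
  simp only [Lbar, rhoZeta, rhoOmega]
  simp only [Derivation.leibniz, pderiv_C, smul_eq_mul]
  ring_nf

lemma Lbar_zero : Lbar 0 = 0 := by simp [Lbar]

lemma Lbar_iter_q (k : ℕ) : Lbar^[k+1] (gRow 4) = 0 := by
  rw [Function.iterate_succ_apply, Lbar_q, Function.iterate_fixed Lbar_zero]

/-- In ℂ[z,w,ζ,ω]: det A₃ = (ρ̂/2)·det B. -/
theorem statement6 : matA3.det = C (1 / 2 : ℂ) * rhoHat * matB.det := by
  rw [Matrix.det_succ_row matA3 4]
  rw [Fin.sum_univ_five]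
  have h : ∀ j : Fin 5, (j:ℕ) ≠ 0 → matA3 4 j = 0 := by
    intro j hj
    obtain ⟨k, hk⟩ := Nat.exists_eq_succ_of_ne_zero hj
    show Lbar^[(j:ℕ)] (gRow 4) = 0
    rw [hk]; exact Lbar_iter_q k
  rw [h 1 (by decide), h 2 (by decide), h 3 (by decide), h 4 (by decide)]
  have hA : matA3 4 0 = C (1 / 2 : ℂ) * rhoHat := rfl
  have hsub : matA3.submatrix (Fin.succAbove 4) (Fin.succAbove 0) = matB := by
    ext i j
    simp only [Matrix.submatrix_apply, matA3, matB, Matrix.of_apply]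
    rw [show ((4:Fin 5).succAbove i) = i.castSucc from congrFun Fin.succAbove_last i,
      show ((0:Fin 5).succAbove j) = j.succ from Fin.zero_succAbove j, Fin.val_succ]
  rw [hA, hsub]
  simp only [show ((4:Fin 5):ℕ) = 4 from rfl, show ((0:Fin 5):ℕ) = 0 from rfl,
    mul_zero, zero_mul, add_zero, Nat.add_zero]
  norm_num
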